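/- Let α = (α_i)_{i≥0} and β = (β_i)_{i≥0} be two sequences of complex numbers with α_0 = β_0. Then for every positive integer n, det(P_{α,β}(n)) = det(T_{α̂,β̂}(n)), where α̂, β̂ are the binomial inverse transforms of α, β. -/

import Mathlib

/-! If a kernel `t k l` is constant along diagonals, its binomial transform in both indices,
`∑ C(i,k) C(j,l) t k l`, satisfies the Pascal recurrence (Pascal's rule in each index). For the
Töplitz kernel of `α̂, β̂` its boundary values are the binomial transforms of `α̂, β̂`, which are
`α, β` by binomial inversion (the Gregory–Newton formula). Hence `P_{α,β}(n) = L T_{α̂,β̂}(n) Lᵀ`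
with `L = (C(i,j))` unitriangular. -/

open Matrix

/-- Entry `P_{i,j}` of the generalized Pascal triangle associated to sequences `α`, `β`:
`P_{i,0} = α i`, `P_{0,j} = β j`, and `P_{i,j} = P_{i-1,j} + P_{i,j-1}` for `i, j ≥ 1`. -/
def pascalEntry {R : Type*} [CommRing R] (α β : ℕ → R) : ℕ → ℕ → R
  | i, 0 => α i
  | 0, j + 1 => β (j + 1)
  | i + 1, j + 1 => pascalEntry α β i (j + 1) + pascalEntry α β (i + 1) j

/-- The generalized Pascal triangle `P_{α,β}(n)`. -/
def genPascal {R : Type*} [CommRing R] (α β : ℕ → R) (n : ℕ) :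
    Matrix (Fin n) (Fin n) R :=
  Matrix.of fun i j => pascalEntry α β (i : ℕ) (j : ℕ)

/-- The Töplitz matrix `T_{α,β}(n)`: `t_{i,j} = α_{i-j}` if `i ≥ j`, else `β_{j-i}`. -/
def toeplitz {R : Type*} [CommRing R] (α β : ℕ → R) (n : ℕ) :
    Matrix (Fin n) (Fin n) R :=
  Matrix.of fun i j => if (j : ℕ) ≤ (i : ℕ) then α ((i : ℕ) - (j : ℕ)) else β ((j : ℕ) - (i : ℕ))

/-- The unipotent lower triangular matrix `L(n)` with `L_{i,j} = C(i,j)` for `i ≥ j`. -/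
def lowerL (R : Type*) [CommRing R] (n : ℕ) : Matrix (Fin n) (Fin n) R :=
  Matrix.of fun i j => if (j : ℕ) ≤ (i : ℕ) then ((i : ℕ).choose (j : ℕ) : R) else 0

/-- The binomial inverse transform `α̂_i = ∑_{k=0}^{i} (-1)^{i+k} C(i,k) α_k`. -/
def hatSeq {R : Type*} [CommRing R] (α : ℕ → R) (i : ℕ) : R :=
  ∑ k ∈ Finset.range (i + 1), (-1 : R) ^ (i + k) * (i.choose k : R) * α k

/-- The binomial transform `α̌_i = ∑_{k=0}^{i} C(i,k) α_k`. -/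
def checkSeq {R : Type*} [CommRing R] (α : ℕ → R) (i : ℕ) : R :=
  ∑ k ∈ Finset.range (i + 1), (i.choose k : R) * α k

open Finset

section BinomialTransform

variable {R : Type*} [CommRing R]

lemma checkSeq_zero (f : ℕ → R) : checkSeq f 0 = f 0 := by
  simp [checkSeq]

lemma checkSeq_add (f g : ℕ → R) : checkSeq (f + g) = checkSeq f + checkSeq g := by
  funext i
  simp [checkSeq, mul_add, sum_add_distrib]

lemma checkSeq_succ (f : ℕ → R) (i : ℕ) :
    checkSeq f (i + 1) = checkSeq f i + checkSeq (fun k => f (k + 1)) i :=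
  sum_choose_succ_mul (fun k _ => f k) i

lemma hatSeq_eq_fwdDiff_iter (α : ℕ → R) (i : ℕ) : hatSeq α i = (fwdDiff 1)^[i] α 0 := by
  rw [fwdDiff_iter_eq_sum_shift, hatSeq]
  refine sum_congr rfl fun k hk => ?_
  have hki : k ≤ i := Nat.lt_succ_iff.mp (mem_range.mp hk)
  rw [show i + k = (i - k) + 2 * k by omega, pow_add, pow_mul, zsmul_eq_mul]
  simp

lemma hatSeq_zero (α : ℕ → R) : hatSeq α 0 = α 0 := by
  simp [hatSeq]

lemma checkSeq_hatSeq (α : ℕ → R) : checkSeq (hatSeq α) = α := by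
  funext i
  simp only [checkSeq, hatSeq_eq_fwdDiff_iter, ← nsmul_eq_mul]
  simpa using (shift_eq_sum_fwdDiff_iter 1 α i 0).symm

end BinomialTransform

section ToeplitzKernel

variable {R : Type*}

def toeplitzEntry (a b : ℕ → R) (k l : ℕ) : R :=
  if l ≤ k then a (k - l) else b (l - k)

lemma toeplitzEntry_succ_succ (a b : ℕ → R) (k l : ℕ) :
    toeplitzEntry a b (k + 1) (l + 1) = toeplitzEntry a b k l := by
  simp [toeplitzEntry]

lemma toeplitzEntry_zero_right (a b : ℕ → R) (k : ℕ) : toeplitzEntry a b k 0 = a k := by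
  simp [toeplitzEntry]

lemma toeplitzEntry_zero_left {a b : ℕ → R} (h : a 0 = b 0) : toeplitzEntry a b 0 = b := by
  funext l
  cases l <;> simp [toeplitzEntry, h]

end ToeplitzKernel

section PascalRecurrence

variable {R : Type*} [CommRing R]

def checkSeq₂ (t : ℕ → ℕ → R) (i j : ℕ) : R :=
  checkSeq (fun k => checkSeq (t k) j) i

lemma checkSeq₂_succ_left (t : ℕ → ℕ → R) (i j : ℕ) :
    checkSeq₂ t (i + 1) j = checkSeq₂ t i j + checkSeq₂ (fun k => t (k + 1)) i j :=
  checkSeq_succ _ i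

lemma checkSeq₂_succ_succ {t : ℕ → ℕ → R} (ht : ∀ k l, t (k + 1) (l + 1) = t k l) (i j : ℕ) :
    checkSeq₂ t (i + 1) (j + 1) = checkSeq₂ t i (j + 1) + checkSeq₂ t (i + 1) j := by
  have hcol : (fun k => checkSeq (t (k + 1)) (j + 1)) =
      (fun k => checkSeq (t (k + 1)) j) + fun k => checkSeq (t k) j := by
    funext k
    simp only [checkSeq_succ, ht, Pi.add_apply]
  rw [checkSeq₂_succ_left, checkSeq₂_succ_left t i j, checkSeq₂, checkSeq₂, hcol, checkSeq_add]
  simp only [checkSeq₂, Pi.add_apply]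
  ring

lemma pascalEntry_checkSeq {a b : ℕ → R} (h : a 0 = b 0) :
    ∀ i j, pascalEntry (checkSeq a) (checkSeq b) i j = checkSeq₂ (toeplitzEntry a b) i j
  | i, 0 => by
    simp only [pascalEntry, checkSeq₂, checkSeq_zero, toeplitzEntry_zero_right]
  | 0, j + 1 => by
    simp only [pascalEntry, checkSeq₂, checkSeq_zero, toeplitzEntry_zero_left h]
  | i + 1, j + 1 => by
    rw [pascalEntry, pascalEntry_checkSeq h i (j + 1), pascalEntry_checkSeq h (i + 1) j,
      checkSeq₂_succ_succ (toeplitzEntry_succ_succ a b)]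

end PascalRecurrence

section PascalMatrix

variable {R : Type*} [CommRing R] {n : ℕ}

lemma lowerL_apply (i j : Fin n) : lowerL R n i j = ((i : ℕ).choose j : R) := by
  rw [lowerL, of_apply]
  split_ifs with hji
  · rfl
  · rw [Nat.choose_eq_zero_of_lt (not_le.mp hji), Nat.cast_zero]

lemma sum_fin_choose_mul (f : ℕ → R) (i : Fin n) :
    ∑ k : Fin n, ((i : ℕ).choose k : R) * f k = checkSeq f i := by
  rw [Fin.sum_univ_eq_sum_range (fun k => ((i : ℕ).choose k : R) * f k), checkSeq]
  refine (sum_subset (range_subset_range.2 i.isLt) fun k _ hk => ?_).symm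
  rw [Nat.choose_eq_zero_of_lt (by simpa using hk), Nat.cast_zero, zero_mul]

lemma lowerL_mul_of_mul_transpose (t : ℕ → ℕ → R) :
    lowerL R n * of (fun i j : Fin n => t i j) * (lowerL R n)ᵀ =
      of fun i j : Fin n => checkSeq₂ t i j := by
  ext i j
  have hcol (k : Fin n) : (of (fun i j : Fin n => t i j) * (lowerL R n)ᵀ) k j = checkSeq (t k) j := by
    simp only [mul_apply, of_apply, transpose_apply, lowerL_apply, mul_comm (t _ _)]
    exact sum_fin_choose_mul (t k) j
  rw [Matrix.mul_assoc, mul_apply, of_apply, checkSeq₂]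
  simp only [hcol, lowerL_apply]
  exact sum_fin_choose_mul (fun k => checkSeq (t k) j) i

lemma det_lowerL : (lowerL R n).det = 1 := by
  have hL : (lowerL R n).IsLowerTriangular := fun i j hij => by
    rw [lowerL_apply, Nat.choose_eq_zero_of_lt (show (i : ℕ) < j from hij), Nat.cast_zero]
  simp [det_of_isLowerTriangular _ hL, lowerL_apply]

lemma genPascal_checkSeq {a b : ℕ → R} (h : a 0 = b 0) :
    genPascal (checkSeq a) (checkSeq b) n = lowerL R n * toeplitz a b n * (lowerL R n)ᵀ := by
  rw [show toeplitz a b n = of fun i j : Fin n => toeplitzEntry a b i j from rfl,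
    lowerL_mul_of_mul_transpose]
  ext i j
  exact pascalEntry_checkSeq h i j

end PascalMatrix

theorem det_genPascal_eq_det_toeplitz_general (α β : ℕ → ℂ) (h : α 0 = β 0) (n : ℕ) :
    (genPascal α β n).det = (toeplitz (hatSeq α) (hatSeq β) n).det := by
  have hhat : hatSeq α 0 = hatSeq β 0 := by rw [hatSeq_zero, hatSeq_zero, h]
  calc (genPascal α β n).det
      = (genPascal (checkSeq (hatSeq α)) (checkSeq (hatSeq β)) n).det := by
        rw [checkSeq_hatSeq, checkSeq_hatSeq]
    _ = (toeplitz (hatSeq α) (hatSeq β) n).det := by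
        rw [genPascal_checkSeq hhat, det_mul, det_mul, det_transpose, det_lowerL, one_mul, mul_one]

/-- `det(P_{α,β}(n)) = det(T_{α̂,β̂}(n))`. -/
theorem det_genPascal_eq_det_toeplitz (α β : ℕ → ℂ) (h : α 0 = β 0) (n : ℕ) (hn : 0 < n) :
    (genPascal α β n).det = (toeplitz (hatSeq α) (hatSeq β) n).det :=
  det_genPascal_eq_det_toeplitz_general α β h n
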